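/- Let n, f, and r be natural numbers with f ≤ n, let P be a finite type of cardinality n, let V be a type of values, and let F be a finite subset of P of cardinality at most f. Let vote : ℕ → P → V → Prop satisfy: for every round ρ, every p ∉ F, and all values w, w', vote ρ p w and vote ρ p w' imply w = w'. Let S be a finite subset of P with S ∩ F = ∅ and cardinality at least ⌊(n−f)/2⌋ + 1, such that vote r p v holds for all p ∈ S. Assume the justification-chain property: for every round ρ > r, every p ∉ F, and every value w, if vote ρ p w then there exist a round ρ' with r ≤ ρ' < ρ and a finite subset Q of P of cardinality at least ⌊(n+f)/2⌋ + 1 with vote ρ' s w for all s ∈ Q. Then for every round ρ ≥ r and every value w, if there exists a finite subset Q of P of cardinality at least ⌊(n+f)/2⌋ + 1 with vote ρ s w for all s ∈ Q, then w = v. -/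

import Mathlib

/-!
Every quorum at round `r` meets the `⌊(n−f)/2⌋ + 1` correct processes that voted `v`, since the
two thresholds add up to more than `n`; a correct member of that quorum voted only `v`. A quorum at
a later round contains a correct process (its size exceeds `f`), whose vote is justified by a
quorum for the same value at an earlier round `≥ r`, so strong induction on the round brings
every quorum back to round `r`.
-/

open Finset

section Quorum

variable {P : Type*} [Fintype P] {n f : ℕ}

theorem exists_mem_notMem_of_quorum (hP : Fintype.card P = n) {F Q : Finset P}
    (hF : #F ≤ f) (hQ : (n + f) / 2 + 1 ≤ #Q) : ∃ p ∈ Q, p ∉ F := by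
  have hQn : #Q ≤ n := hP ▸ Q.card_le_univ
  exact exists_mem_notMem_of_card_lt_card (by omega)

theorem quorum_inter_nonempty [DecidableEq P] (hP : Fintype.card P = n) {Q S : Finset P}
    (hQ : (n + f) / 2 + 1 ≤ #Q) (hS : (n - f) / 2 + 1 ≤ #S) : (Q ∩ S).Nonempty :=
  inter_nonempty_of_card_lt_card_add_card (subset_univ Q) (subset_univ S)
    (by rw [card_univ]; omega)

end Quorum

theorem eq_of_justified_by_earlier {V : Type*} {A : ℕ → V → Prop} {r : ℕ} {v : V}
    (hbase : ∀ w, A r w → w = v)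
    (hstep : ∀ ρ, r < ρ → ∀ w, A ρ w → ∃ ρ', r ≤ ρ' ∧ ρ' < ρ ∧ A ρ' w) :
    ∀ ρ, r ≤ ρ → ∀ w, A ρ w → w = v := by
  intro ρ
  induction ρ using Nat.strong_induction_on with
  | _ ρ ih =>
    intro hrρ w hw
    rcases hrρ.eq_or_lt with rfl | hlt
    · exact hbase w hw
    · obtain ⟨ρ', hrρ', hρ'ρ, hw'⟩ := hstep ρ hlt w hw
      exact ih ρ' hρ'ρ hrρ' w hw'

theorem prepared_value_locked_general (n f r : ℕ)
    (P : Type*) [Fintype P] [DecidableEq P] (hP : Fintype.card P = n)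
    (V : Type*) (F : Finset P) (hF : F.card ≤ f)
    (vote : ℕ → P → V → Prop)
    (hvote : ∀ (ρ : ℕ), ∀ p ∉ F, ∀ w w' : V, vote ρ p w → vote ρ p w' → w = w')
    (v : V)
    (S : Finset P) (hSF : S ∩ F = ∅) (hS : (n - f) / 2 + 1 ≤ S.card)
    (hSv : ∀ p ∈ S, vote r p v)
    (hchain : ∀ ρ : ℕ, r < ρ → ∀ p ∉ F, ∀ w : V, vote ρ p w →
      ∃ ρ' : ℕ, r ≤ ρ' ∧ ρ' < ρ ∧
        ∃ Q : Finset P, (n + f) / 2 + 1 ≤ Q.card ∧ ∀ s ∈ Q, vote ρ' s w) :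
    ∀ ρ : ℕ, r ≤ ρ → ∀ w : V,
      (∃ Q : Finset P, (n + f) / 2 + 1 ≤ Q.card ∧ ∀ s ∈ Q, vote ρ s w) →
      w = v := by
  refine eq_of_justified_by_earlier ?_ ?_
  · rintro w ⟨Q, hQ, hQw⟩
    obtain ⟨p, hp⟩ := quorum_inter_nonempty hP hQ hS
    rw [mem_inter] at hp
    have hpF : p ∉ F := disjoint_left.mp (disjoint_iff_inter_eq_empty.mpr hSF) hp.2
    exact hvote r p hpF w v (hQw p hp.1) (hSv p hp.2)
  · rintro ρ hrρ w ⟨Q, hQ, hQw⟩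
    obtain ⟨p, hpQ, hpF⟩ := exists_mem_notMem_of_quorum hP hF hQ
    exact hchain ρ hrρ p hpF w (hQw p hpQ)

/-- Abstract Lemma 2 with its inductive use: once v is prepared by at least
⌊(n−f)/2⌋ + 1 correct processes at round r, v is the only value that can obtain
a quorum of PREPARE messages at any round ρ ≥ r. -/
theorem prepared_value_locked (n f r : ℕ) (hfn : f ≤ n)
    (P : Type*) [Fintype P] [DecidableEq P] (hP : Fintype.card P = n)
    (V : Type*) (F : Finset P) (hF : F.card ≤ f)
    (vote : ℕ → P → V → Prop)
    (hvote : ∀ (ρ : ℕ), ∀ p ∉ F, ∀ w w' : V, vote ρ p w → vote ρ p w' → w = w')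
    (v : V)
    (S : Finset P) (hSF : S ∩ F = ∅) (hS : (n - f) / 2 + 1 ≤ S.card)
    (hSv : ∀ p ∈ S, vote r p v)
    (hchain : ∀ ρ : ℕ, r < ρ → ∀ p ∉ F, ∀ w : V, vote ρ p w →
      ∃ ρ' : ℕ, r ≤ ρ' ∧ ρ' < ρ ∧
        ∃ Q : Finset P, (n + f) / 2 + 1 ≤ Q.card ∧ ∀ s ∈ Q, vote ρ' s w) :
    ∀ ρ : ℕ, r ≤ ρ → ∀ w : V,
      (∃ Q : Finset P, (n + f) / 2 + 1 ≤ Q.card ∧ ∀ s ∈ Q, vote ρ s w) →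
      w = v :=
  prepared_value_locked_general n f r P hP V F hF vote hvote v S hSF hS hSv hchain
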